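/- arXiv:2109.08970 — 6 statements merged into one kernel-verified Lean document; each statement's English description precedes it below -/
import Mathlib

section
/- For any finite sets E of entities, R of relations, T of time stamps, and any assignment of truth values to all quadruples (h, r, t, τ) ∈ E × R × E × T, there exist, with dimension d = |R|·|T|·|E|, vectors e_h, b_h ∈ ℝ^d for each entity h, time bumps τ⃗ ∈ ℝ^d for each time stamp τ, and axis-aligned boxes r^h, r^t ⊆ ℝ^d for each relation r, such that a quadruple (h, r, t, τ) is true if and only if e_h + b_t + τ⃗ ∈ r^h and e_t + b_h + τ⃗ ∈ r^t. -/
/-- BoxTE full expressiveness with dimension d = |R|·|T|·|E| (relation-independent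
time bumps). -/
theorem boxte_fully_expressive_RTE
    (E R T : Type*) [Fintype E] [Fintype R] [Fintype T]
    (truth : E → R → E → T → Prop) :
    ∃ (d : ℕ), d = Fintype.card R * Fintype.card T * Fintype.card E ∧
    ∃ (e b : E → Fin d → ℝ) (tb : T → Fin d → ℝ)
      (lh uh lt ut : R → Fin d → ℝ),
      (∀ r : R, lh r ≤ uh r) ∧ (∀ r : R, lt r ≤ ut r) ∧
      ∀ (h : E) (r : R) (t : E) (τ : T),
        truth h r t τ ↔
          (e h + b t + tb τ ∈ Set.Icc (lh r) (uh r) ∧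
           e t + b h + tb τ ∈ Set.Icc (lt r) (ut r)) := by
  classical
  refine ⟨Fintype.card (R × T × E), by simp [mul_assoc], ?_⟩
  obtain ⟨φ⟩ : Nonempty (Fin (Fintype.card (R × T × E)) ≃ R × T × E) :=
    ⟨(Fintype.equivFin _).symm⟩
  refine ⟨(fun h i => if truth h (φ i).1 (φ i).2.2 (φ i).2.1 then 0 else 13),
          (fun t i => if (φ i).2.2 = t then 10 else 0),
          (fun τ i => if (φ i).2.1 = τ then 3 else 0),
          (fun r i => if (φ i).1 = r then 0 else -100),
          (fun r i => if (φ i).1 = r then 24 else 100),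
          (fun _ _ => -100), (fun _ _ => 100), ?_, ?_, ?_⟩
  · intro r i
    dsimp only
    split <;> norm_num
  · intro r i
    norm_num
  · intro h r t τ
    constructor
    · intro htruth
      constructor
      · rw [Set.mem_Icc]
        constructor <;> intro i <;> dsimp only [Pi.add_apply] <;>
          split_ifs <;> (try simp_all) <;> norm_num
      · rw [Set.mem_Icc]
        constructor <;> intro i <;> dsimp only [Pi.add_apply] <;>
          split_ifs <;> norm_num
    · rintro ⟨hHead, -⟩
      rw [Set.mem_Icc] at hHead
      have hub := hHead.2 (φ.symm (r, τ, t))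
      simp only [Pi.add_apply, Equiv.apply_symm_apply] at hub
      by_contra hF
      simp [hF] at hub
      norm_num at hub
end

section
/- For any finite sets E, R, T and any assignment of truth values to all quadruples in E × R × E × T, the BoxTE model with dimension d = |R|·|E|² is fully expressive: there exist entity base vectors, entity bump vectors, time bump vectors, and axis-aligned head/tail boxes in ℝ^d such that a quadruple (h, r, t, τ) is true iff e_h + b_t + τ⃗ ∈ r^h and e_t + b_h + τ⃗ ∈ r^t. -/
/-- BoxTE full expressiveness with dimension d = |R|·|E|² (relation-independent
time bumps). -/
theorem boxte_fully_expressive_REE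
    (E R T : Type*) [Fintype E] [Fintype R] [Fintype T]
    (truth : E → R → E → T → Prop) :
    ∃ (d : ℕ), d = Fintype.card R * Fintype.card E ^ 2 ∧
    ∃ (e b : E → Fin d → ℝ) (tb : T → Fin d → ℝ)
      (lh uh lt ut : R → Fin d → ℝ),
      (∀ r : R, lh r ≤ uh r) ∧ (∀ r : R, lt r ≤ ut r) ∧
      ∀ (h : E) (r : R) (t : E) (τ : T),
        truth h r t τ ↔
          (e h + b t + tb τ ∈ Set.Icc (lh r) (uh r) ∧
           e t + b h + tb τ ∈ Set.Icc (lt r) (ut r)) := by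
  classical
  refine ⟨Fintype.card R * Fintype.card E ^ 2, rfl, ?_⟩
  have hcard : Fintype.card (R × E × E) = Fintype.card R * Fintype.card E ^ 2 := by
    simp [Fintype.card_prod, sq, mul_assoc]
  set d := Fintype.card R * Fintype.card E ^ 2 with hd
  let idx : Fin d ≃ R × E × E := (Fintype.equivFinOfCardEq hcard).symm
  refine ⟨fun h i => if (idx i).2.1 = h then 4 else 0,
          fun t i => if (idx i).2.2 = t then 2 else 0,
          fun τ i => if truth (idx i).2.1 (idx i).1 (idx i).2.2 τ then 0 else 1,
          fun _ _ => 0, fun r i => if (idx i).1 = r then 6 else 7,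
          fun _ _ => 0, fun _ _ => 7, ?_, ?_, ?_⟩
  · intro r i; dsimp only; split <;> norm_num
  · intro r i; norm_num
  · intro h r t τ
    constructor
    · intro ht
      refine ⟨⟨?_, ?_⟩, ⟨?_, ?_⟩⟩ <;> intro i <;>
        simp only [Pi.add_apply]
      · split <;> split <;> split <;> norm_num
      · by_cases h1 : (idx i).1 = r
        · by_cases h2 : (idx i).2.1 = h
          · by_cases h3 : (idx i).2.2 = t
            · have : truth (idx i).2.1 (idx i).1 (idx i).2.2 τ := by
                rw [h1, h2, h3]; exact ht
              simp [h1, h2, h3, ht]; norm_num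
            · simp only [h1, h2, h3, if_true, if_false]
              split <;> norm_num
          · simp only [h1, h2, if_true, if_false]
            split <;> split <;> norm_num
        · simp only [h1, if_false]
          split <;> split <;> split <;> norm_num
      · split <;> split <;> split <;> norm_num
      · split <;> split <;> split <;> norm_num
    · rintro ⟨⟨-, hub⟩, -⟩
      have hi := hub (idx.symm (r, h, t))
      simp only [Pi.add_apply, Equiv.apply_symm_apply] at hi
      by_contra hf
      simp [hf] at hi
      norm_num at hi
end

section
/- BoxTE captures cross-time hierarchy: if r₁^h − τ₁^{r₁} ⊆ r₂^h − τ₂^{r₂} and r₁^t − τ₁^{r₁} ⊆ r₂^t − τ₂^{r₂}, then for all entities x, y, if the fact (x, r₁, y, τ₁) holds (i.e., e_x + b_y + τ₁^{r₁} ∈ r₁^h and e_y + b_x + τ₁^{r₁} ∈ r₁^t), then the fact (x, r₂, y, τ₂) holds. -/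
/-- BoxTE captures cross-time hierarchy: containment of time-induced boxes
implies the hierarchy inference pattern across time stamps. -/
theorem boxte_cross_time_hierarchy
    (d : ℕ) (E : Type*) (e b : E → Fin d → ℝ)
    (r₁h r₁t r₂h r₂t : Set (Fin d → ℝ)) (τ₁r₁ τ₂r₂ : Fin d → ℝ)
    (hh : (fun x => x - τ₁r₁) '' r₁h ⊆ (fun x => x - τ₂r₂) '' r₂h)
    (ht : (fun x => x - τ₁r₁) '' r₁t ⊆ (fun x => x - τ₂r₂) '' r₂t) :
    ∀ x y : E,
      (e x + b y + τ₁r₁ ∈ r₁h ∧ e y + b x + τ₁r₁ ∈ r₁t) →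
      (e x + b y + τ₂r₂ ∈ r₂h ∧ e y + b x + τ₂r₂ ∈ r₂t) := by
  intro x y ⟨h1, h2⟩
  constructor
  · obtain ⟨z, hz, hzeq⟩ := hh ⟨_, h1, rfl⟩
    simp only at hzeq
    have h := sub_eq_iff_eq_add.mp hzeq
    have : e x + b y + τ₂r₂ = z := by rw [h]; abel
    rwa [this]
  · obtain ⟨z, hz, hzeq⟩ := ht ⟨_, h2, rfl⟩
    simp only at hzeq
    have h := sub_eq_iff_eq_add.mp hzeq
    have : e y + b x + τ₂r₂ = z := by rw [h]; abel
    rwa [this]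
end

section
/- BoxTE captures cross-time intersection: if r₃^h − τ₃^{r₃} = (r₁^h − τ₁^{r₁}) ∩ (r₂^h − τ₂^{r₂}) and r₃^t − τ₃^{r₃} = (r₁^t − τ₁^{r₁}) ∩ (r₂^t − τ₂^{r₂}), then for all entities x, y, if facts (x, r₁, y, τ₁) and (x, r₂, y, τ₂) both hold in the BoxTE configuration, then (x, r₃, y, τ₃) holds. -/
lemma boxte_aux {d : ℕ} {S₁ S₂ S₃ : Set (Fin d → ℝ)} {τ₁ τ₂ τ₃ v : Fin d → ℝ}
    (h : (fun x => x - τ₃) '' S₃ = ((fun x => x - τ₁) '' S₁) ∩ ((fun x => x - τ₂) '' S₂))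
    (h1 : v + τ₁ ∈ S₁) (h2 : v + τ₂ ∈ S₂) : v + τ₃ ∈ S₃ := by
  have : v ∈ (fun x => x - τ₃) '' S₃ := by
    rw [h]
    constructor
    · exact ⟨v + τ₁, h1, by simp⟩
    · exact ⟨v + τ₂, h2, by simp⟩
  obtain ⟨w, hw, hwe⟩ := this
  have : w = v + τ₃ := by
    have := hwe; funext i; have := congrFun hwe i; simp [Pi.add_apply] at this ⊢; linarith
  rwa [← this]

/-- BoxTE captures cross-time intersection. -/
theorem boxte_cross_time_intersection
    (d : ℕ) (E : Type*) (e b : E → Fin d → ℝ)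
    (r₁h r₁t r₂h r₂t r₃h r₃t : Set (Fin d → ℝ))
    (τ₁r₁ τ₂r₂ τ₃r₃ : Fin d → ℝ)
    (hh : (fun x => x - τ₃r₃) '' r₃h =
          ((fun x => x - τ₁r₁) '' r₁h) ∩ ((fun x => x - τ₂r₂) '' r₂h))
    (ht : (fun x => x - τ₃r₃) '' r₃t =
          ((fun x => x - τ₁r₁) '' r₁t) ∩ ((fun x => x - τ₂r₂) '' r₂t)) :
    ∀ x y : E,
      (e x + b y + τ₁r₁ ∈ r₁h ∧ e y + b x + τ₁r₁ ∈ r₁t) →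
      (e x + b y + τ₂r₂ ∈ r₂h ∧ e y + b x + τ₂r₂ ∈ r₂t) →
      (e x + b y + τ₃r₃ ∈ r₃h ∧ e y + b x + τ₃r₃ ∈ r₃t) := by
  intro x y ⟨h1, h2⟩ ⟨h3, h4⟩
  exact ⟨boxte_aux hh h1 h3, boxte_aux ht h2 h4⟩
end

section
/- BoxTE captures cross-time inversion: if r₂^h − τ₂^{r₂} = r₁^t − τ₁^{r₁} and r₂^t − τ₂^{r₂} = r₁^h − τ₁^{r₁}, then for all entities x, y, the fact (x, r₁, y, τ₁) holds in the configuration if and only if the fact (y, r₂, x, τ₂) holds. -/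
lemma mem_sub_image {d : ℕ} (S : Set (Fin d → ℝ)) (τ v : Fin d → ℝ) :
    v ∈ (fun x => x - τ) '' S ↔ v + τ ∈ S := by
  constructor
  · rintro ⟨w, hw, rfl⟩; simpa using hw
  · intro h; exact ⟨v + τ, h, by simp⟩

/-- BoxTE captures cross-time inversion. -/
theorem boxte_cross_time_inversion
    (d : ℕ) (E : Type*) (e b : E → Fin d → ℝ)
    (r₁h r₁t r₂h r₂t : Set (Fin d → ℝ)) (τ₁r₁ τ₂r₂ : Fin d → ℝ)
    (hh : (fun x => x - τ₂r₂) '' r₂h = (fun x => x - τ₁r₁) '' r₁t)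
    (ht : (fun x => x - τ₂r₂) '' r₂t = (fun x => x - τ₁r₁) '' r₁h) :
    ∀ x y : E,
      (e x + b y + τ₁r₁ ∈ r₁h ∧ e y + b x + τ₁r₁ ∈ r₁t) ↔
      (e y + b x + τ₂r₂ ∈ r₂h ∧ e x + b y + τ₂r₂ ∈ r₂t) := by
  intro x y
  rw [← mem_sub_image r₁h τ₁r₁, ← mem_sub_image r₁t τ₁r₁,
      ← mem_sub_image r₂h τ₂r₂, ← mem_sub_image r₂t τ₂r₂, hh, ht]
  tauto
end

section
/- Full expressiveness for a single relation and single time stamp: for any finite entity set E and any set S ⊆ E × E of pairs designated true, there exist, with d = |E|², vectors e_h, b_h ∈ ℝ^d for each entity h and boxes r^h, r^t ⊆ ℝ^d, such that (x, y) ∈ S if and only if e_x + b_y ∈ r^h and e_y + b_x ∈ r^t. -/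
/-- Static BoxE full expressiveness for a single relation with d = |E|². -/
theorem boxe_single_relation_fully_expressive
    (E : Type*) [Fintype E] (S : Set (E × E)) :
    ∃ (d : ℕ), d = Fintype.card E ^ 2 ∧
    ∃ (e b : E → Fin d → ℝ) (lh uh lt ut : Fin d → ℝ),
      lh ≤ uh ∧ lt ≤ ut ∧
      ∀ x y : E,
        (x, y) ∈ S ↔
          (e x + b y ∈ Set.Icc lh uh ∧ e y + b x ∈ Set.Icc lt ut) := by
  classical
  refine ⟨Fintype.card E ^ 2, rfl, ?_⟩
  have hcard : Fintype.card E ^ 2 = Fintype.card (E × E) := by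
    simp [Fintype.card_prod, sq]
  set d := Fintype.card E ^ 2 with hd
  let f : Fin d → E × E := fun i => (Fintype.equivFin (E × E)).symm (Fin.cast hcard i)
  refine ⟨(fun x i => if (f i).1 = x then 1 else 0),
          (fun y i => if (f i).2 = y then 1 else 0),
          (fun _ => 0), (fun i => if f i ∈ S then 2 else 1),
          (fun _ => 0), (fun _ => 2), ?_, ?_, ?_⟩
  · intro i; dsimp; split <;> norm_num
  · intro i; norm_num
  · intro x y
    constructor
    · intro hS
      refine ⟨⟨?_, ?_⟩, ?_, ?_⟩ <;> intro i <;> dsimp [Pi.add_apply]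
      · positivity
      · by_cases hfi : f i = (x, y)
        · have h1 : (f i).1 = x := by rw [hfi]
          have h2 : (f i).2 = y := by rw [hfi]
          simp [h1, h2, hfi ▸ hS]; norm_num
        · have : (f i).1 ≠ x ∨ (f i).2 ≠ y := by
            by_contra h
            push_neg at h
            exact hfi (Prod.ext h.1 h.2)
          rcases this with h | h <;> simp [h] <;> split <;> split <;> norm_num
      · positivity
      · split <;> split <;> norm_num
    · intro ⟨⟨_, hub⟩, _⟩
      set i : Fin d := Fin.cast hcard.symm (Fintype.equivFin (E × E) (x, y)) with hi
      have hfi : f i = (x, y) := by simp [f, hi]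
      have := hub i
      simp only [Pi.add_apply] at this
      by_contra hS
      have h1 : (f i).1 = x := by rw [hfi]
      have h2 : (f i).2 = y := by rw [hfi]
      rw [h1, h2, hfi] at this
      simp [hS] at this
      linarith
end
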